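/- For every n ≥ 1, the binary echelon tree T^be_n equals the tree T*_n constructed explicitly as follows: write n = Σ_{i=1}^{w} f(i) where f(1) < f(2) < ... < f(w) are the powers of two in the binary expansion of n; take a caterpillar with w leaves and replace its leaves, proceeding from the cherry leaf farthest from the root toward the root, by fully balanced trees with f(1), f(2), ..., f(w) leaves respectively. -/

import Mathlib

/-- Rooted binary trees: a leaf, or an internal vertex with two child subtrees. -/
inductive BTree where
  | leaf : BTree
  | node : BTree → BTree → BTree
deriving DecidableEq

namespace BTree

/-- Number of leaves of a rooted binary tree. -/
def numLeaves : BTree → ℕ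
  | leaf => 1
  | node l r => numLeaves l + numLeaves r

/-- Sackin index: sum over internal vertices `v` of `n_{v_a} + n_{v_b}`. -/
def sackin : BTree → ℕ
  | leaf => 0
  | node l r => sackin l + sackin r + (numLeaves l + numLeaves r)

/-- Colless index: sum over internal vertices `v` of `|n_{v_a} - n_{v_b}|`. -/
def colless : BTree → ℕ
  | leaf => 0
  | node l r =>
      colless l + colless r +
        (max (numLeaves l) (numLeaves r) - min (numLeaves l) (numLeaves r))

/-- `N_a`: sum over internal vertices of the larger child-subtree leaf count. -/
def Na : BTree → ℕ
  | leaf => 0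
  | node l r => Na l + Na r + max (numLeaves l) (numLeaves r)

/-- `N_b`: sum over internal vertices of the smaller child-subtree leaf count. -/
def Nb : BTree → ℕ
  | leaf => 0
  | node l r => Nb l + Nb r + min (numLeaves l) (numLeaves r)

/-- `Δ_CS = C - S`, as an integer. -/
def deltaCS (T : BTree) : ℤ := (colless T : ℤ) - (sackin T : ℤ)

/-- Caterpillar trees: every internal vertex has at least one leaf child. -/
def isCaterpillar : BTree → Prop
  | leaf => True
  | node l r => (l = leaf ∧ isCaterpillar r) ∨ (r = leaf ∧ isCaterpillar l)

/-- The fully balanced tree of height `h`. -/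
def fbTree : ℕ → BTree
  | 0 => leaf
  | h + 1 => node (fbTree h) (fbTree h)

end BTree

namespace BTree

/-- The binary echelon tree `T^be_n`: for `n > 1` with `k = ⌈log₂ n⌉`,
`T^be_n = (T^fb_{k-1}, T^be_{n - 2^{k-1}})`. -/
def beTree : ℕ → BTree
  | 0 => leaf
  | 1 => leaf
  | n + 2 =>
      node (fbTree (Nat.clog 2 (n + 2) - 1))
        (beTree ((n + 2) - 2 ^ (Nat.clog 2 (n + 2) - 1)))
decreasing_by
  have : 0 < 2 ^ (Nat.clog 2 (n + 2) - 1) := pow_pos (by norm_num) _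
  omega

/-- The exponents of the powers of two in the binary expansion of `n`, in
increasing order; its length is the binary weight `w(n)`. -/
def expList (n : ℕ) : List ℕ := (List.range (n + 1)).filter (fun i => n.testBit i)

/-- The explicit construction `T*_n`: take a caterpillar with `w(n)` leaves and
replace its leaves, from the cherry leaf farthest from the root toward the root, by
fully balanced trees with `f_n(1) < f_n(2) < … < f_n(w)` leaves respectively. -/
def starTree (n : ℕ) : BTree :=
  match expList n with
  | [] => leaf
  | e :: es => es.foldl (fun t e' => node (fbTree e') t) (fbTree e)

end BTree


namespace BTree

lemma filter_range_shrink (x c d : ℕ) (hcd : c ≤ d) (hx : x < 2 ^ c) :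
    (List.range d).filter (fun i => x.testBit i) =
      (List.range c).filter (fun i => x.testBit i) := by
  obtain ⟨b, rfl⟩ := Nat.exists_eq_add_of_le hcd
  rw [List.range_add, List.filter_append]
  have h0 : (List.map (fun j => c + j) (List.range b)).filter (fun i => x.testBit i) = [] := by
    rw [List.filter_eq_nil_iff]
    intro a ha
    simp only [List.mem_map, List.mem_range] at ha
    obtain ⟨j, _, rfl⟩ := ha
    simp [Nat.testBit_eq_false_of_lt (lt_of_lt_of_le hx
      (Nat.pow_le_pow_right (by norm_num) (Nat.le_add_right c j)))]
  rw [h0, List.append_nil]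

lemma expList_eq_range (n m : ℕ) (h : n < 2 ^ m) :
    expList n = (List.range m).filter (fun i => n.testBit i) := by
  unfold expList
  rcases le_total m (n + 1) with hm | hm
  · exact filter_range_shrink n m (n + 1) hm h
  · exact (filter_range_shrink n (n + 1) m hm (by
      have := (Nat.lt_two_pow_self (n := n))
      exact lt_of_lt_of_le this (Nat.pow_le_pow_right (by norm_num) (by omega)))).symm

lemma expList_split (n m : ℕ) (h1 : 2 ^ m ≤ n) (h2 : n < 2 ^ (m + 1)) :
    expList n = expList (n - 2 ^ m) ++ [m] := by
  have hpow : 2 ^ (m + 1) = 2 ^ m + 2 ^ m := by rw [pow_succ]; ring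
  have hn' : n - 2 ^ m < 2 ^ m := by omega
  rw [expList_eq_range n (m + 1) h2, expList_eq_range (n - 2 ^ m) m hn',
    List.range_succ, List.filter_append]
  congr 1
  · apply List.filter_congr
    intro i hi
    simp only [List.mem_range] at hi
    conv_lhs => rw [show n = 2 ^ m + (n - 2 ^ m) by omega]
    rw [Nat.testBit_two_pow_add_gt hi]
  · have hbit : n.testBit m = true := by
      rw [show n = 2 ^ m + (n - 2 ^ m) by omega]
      rw [Nat.testBit_two_pow_add_eq]
      simp [Nat.testBit_eq_false_of_lt hn']
    simp [hbit]

lemma expList_ne_nil (n : ℕ) (h : 1 ≤ n) : expList n ≠ [] := by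
  have h1 : 2 ^ Nat.log 2 n ≤ n := Nat.pow_log_le_self 2 (by omega)
  have h2 : n < 2 ^ (Nat.log 2 n + 1) := Nat.lt_pow_succ_log_self (by norm_num) n
  rw [expList_split n (Nat.log 2 n) h1 h2]
  simp

lemma starTree_node (N n m : ℕ) (hn : 1 ≤ n) (h : expList N = expList n ++ [m]) :
    starTree N = node (fbTree m) (starTree n) := by
  obtain ⟨e, es, hev⟩ : ∃ e es, expList n = e :: es := by
    cases hE : expList n with
    | nil => exact absurd hE (expList_ne_nil n hn)
    | cons e es => exact ⟨e, es, rfl⟩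
  unfold starTree
  rw [h, hev]
  simp [List.foldl_append]

lemma beTree_two_le (n : ℕ) (h : 2 ≤ n) :
    beTree n = node (fbTree (Nat.clog 2 n - 1))
      (beTree (n - 2 ^ (Nat.clog 2 n - 1))) := by
  obtain ⟨k, rfl⟩ : ∃ k, n = k + 2 := ⟨n - 2, by omega⟩
  rw [beTree]

lemma beTree_pow (m : ℕ) : beTree (2 ^ m) = fbTree m := by
  induction m with
  | zero => simp [beTree, fbTree]
  | succ m ih =>
    have h2 : (2 : ℕ) ≤ 2 ^ (m + 1) := by
      calc (2:ℕ) = 2 ^ 1 := by norm_num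
      _ ≤ 2 ^ (m + 1) := Nat.pow_le_pow_right (by norm_num) (by omega)
    rw [beTree_two_le _ h2, Nat.clog_pow 2 (m + 1) (by norm_num)]
    have hsub : 2 ^ (m + 1) - 2 ^ (m + 1 - 1) = 2 ^ m := by
      simp [pow_succ]; omega
    rw [hsub]
    simp only [Nat.add_sub_cancel]
    rw [ih]
    rfl

end BTree

open BTree in
/-- for every `n ≥ 1`, the binary echelon tree equals the explicitly
constructed tree `T*_n`. -/
theorem beTree_eq_starTree (n : ℕ) (hn : 1 ≤ n) : beTree n = starTree n := by
  induction n using Nat.strong_induction_on with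
  | _ n ih =>
  set m := Nat.log 2 n with hm
  have h1 : 2 ^ m ≤ n := Nat.pow_log_le_self 2 (by omega)
  have h2 : n < 2 ^ (m + 1) := Nat.lt_pow_succ_log_self (by norm_num) n
  have hsplit := expList_split n m h1 h2
  rcases eq_or_lt_of_le h1 with heq | hlt
  · -- n = 2 ^ m
    have hst : starTree n = fbTree m := by
      unfold starTree
      rw [hsplit, show n - 2 ^ m = 0 by omega]
      have : expList 0 = [] := rfl
      rw [this]
      simp
    rw [hst, ← heq, beTree_pow]
  · -- 2 ^ m < n
    have hn' : 1 ≤ n - 2 ^ m := by omega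
    have hpow1 : 1 ≤ 2 ^ m := Nat.one_le_two_pow
    have hclog : Nat.clog 2 n = m + 1 := by
      have hle : Nat.clog 2 n ≤ m + 1 := (Nat.clog_le_iff_le_pow (by norm_num)).2 (le_of_lt h2)
      have hgt : m < Nat.clog 2 n := (Nat.lt_clog_iff_pow_lt (by norm_num)).2 hlt
      omega
    have h2n : 2 ≤ n := by
      rcases Nat.lt_or_ge n 2 with h | h
      · interval_cases n <;> simp_all
      · exact h
    rw [beTree_two_le n h2n, hclog]
    simp only [Nat.add_sub_cancel]
    rw [starTree_node n (n - 2 ^ m) m hn' hsplit]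
    rw [ih (n - 2 ^ m) (by omega) hn']
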